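/- For distinct integers j ≠ m, the derivative of the Sinc function S_m at the node x_j = jΔx equals (−1)^{j−m} / (Δx (j−m)). -/

import Mathlib

open Real

namespace Real

theorem hasDerivAt_sinc_of_ne_zero {x : ℝ} (hx : x ≠ 0) :
    HasDerivAt sinc ((cos x * x - sin x) / x ^ 2) x := by
  have hsinc : (fun t => sin t / t) =ᶠ[nhds x] sinc := by
    filter_upwards [eventually_ne_nhds hx] with t ht using (sinc_of_ne_zero ht).symm
  simpa using ((hasDerivAt_sin x).div (hasDerivAt_id x) hx).congr_of_eventuallyEq hsinc.symm

theorem hasDerivAt_sinc_int_mul_pi {k : ℤ} (hk : k ≠ 0) :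
    HasDerivAt sinc ((-1) ^ k / (k * π)) (k * π) := by
  have hkπ : (k : ℝ) * π ≠ 0 := mul_ne_zero (Int.cast_ne_zero.mpr hk) pi_ne_zero
  have hcos : cos (k * π) = (-1) ^ k := by simpa using cos_int_mul_pi_sub 0 k
  convert hasDerivAt_sinc_of_ne_zero hkπ using 1
  rw [sin_int_mul_pi, hcos, sub_zero]
  field_simp

end Real

theorem sinc_deriv_at_other_node_general (Δx : ℝ) (hΔ : Δx > 0) (m j : ℤ) (hjm : j ≠ m)
    (S : ℝ → ℝ)
    (hS : ∀ x : ℝ, x ≠ m * Δx →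
      S x = Real.sin (π * (x - m * Δx) / Δx) / (π * (x - m * Δx) / Δx)) :
    deriv S (j * Δx) = (-1 : ℝ) ^ (j - m) / (Δx * ((j : ℝ) - m)) := by
  have hΔ0 : Δx ≠ 0 := hΔ.ne'
  set u : ℝ → ℝ := fun x => π * (x - m * Δx) / Δx
  have hu : HasDerivAt u (π / Δx) (j * Δx) := by
    simpa using (((hasDerivAt_id _).sub_const (m * Δx)).const_mul π).div_const Δx
  have hu_node : u (j * Δx) = ((j - m : ℤ) : ℝ) * π := by
    simp only [u]; push_cast; field_simp
  have hS_eq : S =ᶠ[nhds (j * Δx)] sinc ∘ u := by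
    have hne : (j : ℝ) * Δx ≠ m * Δx := by
      simpa [hΔ0] using (Int.cast_injective (α := ℝ)).ne hjm
    filter_upwards [eventually_ne_nhds hne] with x hx
    have hux : u x ≠ 0 := by
      simpa [u, hΔ0, pi_ne_zero, sub_eq_zero] using hx
    rw [hS x hx, Function.comp_apply, sinc_of_ne_zero hux]
  have hsinc := hasDerivAt_sinc_int_mul_pi (sub_ne_zero.mpr hjm)
  rw [← hu_node] at hsinc
  rw [hS_eq.deriv_eq, (hsinc.comp _ hu).deriv, hu_node]
  have hjm' : (j : ℝ) - m ≠ 0 := sub_ne_zero.mpr (Int.cast_injective.ne hjm)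
  push_cast
  field_simp

theorem sinc_deriv_at_other_node (Δx : ℝ) (hΔ : Δx > 0) (m j : ℤ) (hjm : j ≠ m)
    (S : ℝ → ℝ)
    (hS : ∀ x : ℝ, x ≠ m * Δx →
      S x = Real.sin (π * (x - m * Δx) / Δx) / (π * (x - m * Δx) / Δx))
    (hSm : S (m * Δx) = 1) :
    deriv S (j * Δx) = (-1 : ℝ) ^ (j - m) / (Δx * ((j : ℝ) - m)) :=
  sinc_deriv_at_other_node_general Δx hΔ m j hjm S hS
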